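/- Let n, m ≥ 0, A ⊆ Act, a_i, b_j ∈ Act and t_i, s_j be CLL process terms (i < n, j < m). Define Ω1 = {a_i.(t_i ∥_A □_{j<m}b_j.s_j) : i < n, a_i ∉ A}, Ω2 = {b_j.(□_{i<n}a_i.t_i ∥_A s_j) : j < m, b_j ∉ A}, Ω3 = {a_i.(t_i ∥_A s_j) : i < n, j < m, a_i = b_j ∈ A}. Then: (1) □_{i<n}a_i.t_i ∥_A □_{j<m}b_j.s_j ⊑_RS ((□Ω1)□(□Ω2))□(□Ω3); and (2) if no term of {t_i : a_i ∈ A and a_i ≠ b_j for all j < m} ∪ {s_j : b_j ∈ A and b_j ≠ a_i for all i < n} lies in F_CLL, then ((□Ω1)□(□Ω2))□(□Ω3) ⊑_RS □_{i<n}a_i.t_i ∥_A □_{j<m}b_j.s_j. -/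

import Mathlib

namespace CLL

attribute [local instance] Classical.propDecidable

/-- CLL process terms over a set `Act` of visible actions.  The action `τ` is
represented by `none : Option Act`, a visible action `a` by `some a`. -/
inductive Tm (Act : Type) : Type where
  | nil  : Tm Act                            -- 0
  | bot  : Tm Act                            -- ⊥
  | pre  : Option Act → Tm Act → Tm Act      -- α.t
  | ec   : Tm Act → Tm Act → Tm Act          -- t □ t
  | conj : Tm Act → Tm Act → Tm Act          -- t ∧ t
  | disj : Tm Act → Tm Act → Tm Act          -- t ∨ t
  | par  : Set Act → Tm Act → Tm Act → Tm Act -- t ∥_A t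

/-- A transition model: a set of transitions `t →α t'`, of instances `t F` of the
inconsistency predicate, and of instances `t F̄_α` of the auxiliary predicates. -/
structure Model (Act : Type) where
  Tr   : Tm Act → Option Act → Tm Act → Prop
  F    : Tm Act → Prop
  Fbar : Tm Act → Option Act → Prop

variable {Act : Type}

/-- The least transition relation of the positive TSS `Strip(P_CLL, M)`:
ground instances of transition rules of `P_CLL` whose negative premises
(checked against `M`) hold, with those negative premises removed. -/
inductive STr (M : Model Act) : Tm Act → Option Act → Tm Act → Prop where
  | pre (α : Option Act) (t : Tm Act) : STr M (Tm.pre α t) α t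
  | ecL {t1 t2 y1 : Tm Act} {a : Act} :
      STr M t1 (some a) y1 → (∀ y, ¬ M.Tr t2 none y) →
      STr M (Tm.ec t1 t2) (some a) y1
  | ecR {t1 t2 y2 : Tm Act} {a : Act} :
      (∀ y, ¬ M.Tr t1 none y) → STr M t2 (some a) y2 →
      STr M (Tm.ec t1 t2) (some a) y2
  | ecTauL {t1 t2 y1 : Tm Act} :
      STr M t1 none y1 → STr M (Tm.ec t1 t2) none (Tm.ec y1 t2)
  | ecTauR {t1 t2 y2 : Tm Act} :
      STr M t2 none y2 → STr M (Tm.ec t1 t2) none (Tm.ec t1 y2)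
  | conjAct {t1 t2 y1 y2 : Tm Act} {a : Act} :
      STr M t1 (some a) y1 → STr M t2 (some a) y2 →
      STr M (Tm.conj t1 t2) (some a) (Tm.conj y1 y2)
  | conjTauL {t1 t2 y1 : Tm Act} :
      STr M t1 none y1 → STr M (Tm.conj t1 t2) none (Tm.conj y1 t2)
  | conjTauR {t1 t2 y2 : Tm Act} :
      STr M t2 none y2 → STr M (Tm.conj t1 t2) none (Tm.conj t1 y2)
  | disjL (t1 t2 : Tm Act) : STr M (Tm.disj t1 t2) none t1
  | disjR (t1 t2 : Tm Act) : STr M (Tm.disj t1 t2) none t2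
  | parTauL {A : Set Act} {t1 t2 y1 : Tm Act} :
      STr M t1 none y1 → STr M (Tm.par A t1 t2) none (Tm.par A y1 t2)
  | parTauR {A : Set Act} {t1 t2 y2 : Tm Act} :
      STr M t2 none y2 → STr M (Tm.par A t1 t2) none (Tm.par A t1 y2)
  | parL {A : Set Act} {t1 t2 y1 : Tm Act} {a : Act} :
      STr M t1 (some a) y1 → (∀ y, ¬ M.Tr t2 none y) → a ∉ A →
      STr M (Tm.par A t1 t2) (some a) (Tm.par A y1 t2)
  | parR {A : Set Act} {t1 t2 y2 : Tm Act} {a : Act} :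
      (∀ y, ¬ M.Tr t1 none y) → STr M t2 (some a) y2 → a ∉ A →
      STr M (Tm.par A t1 t2) (some a) (Tm.par A t1 y2)
  | parSync {A : Set Act} {t1 t2 y1 y2 : Tm Act} {a : Act} :
      STr M t1 (some a) y1 → STr M t2 (some a) y2 → a ∈ A →
      STr M (Tm.par A t1 t2) (some a) (Tm.par A y1 y2)

/-- Least model of the `F̄_α` rules of `Strip(P_CLL, M)`. -/
inductive SFbar (M : Model Act) : Tm Act → Option Act → Prop where
  | intro {t1 t2 y : Tm Act} {α : Option Act} :
      STr M (Tm.conj t1 t2) α y → ¬ M.F y → SFbar M (Tm.conj t1 t2) α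

/-- Least model of the `F` rules of `Strip(P_CLL, M)`. -/
inductive SF (M : Model Act) : Tm Act → Prop where
  | bot : SF M Tm.bot
  | pre {t : Tm Act} (α : Option Act) : SF M t → SF M (Tm.pre α t)
  | disj {t1 t2 : Tm Act} : SF M t1 → SF M t2 → SF M (Tm.disj t1 t2)
  | ecL {t1 t2 : Tm Act} : SF M t1 → SF M (Tm.ec t1 t2)
  | ecR {t1 t2 : Tm Act} : SF M t2 → SF M (Tm.ec t1 t2)
  | conjL {t1 t2 : Tm Act} : SF M t1 → SF M (Tm.conj t1 t2)
  | conjR {t1 t2 : Tm Act} : SF M t2 → SF M (Tm.conj t1 t2)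
  | parL {A : Set Act} {t1 t2 : Tm Act} : SF M t1 → SF M (Tm.par A t1 t2)
  | parR {A : Set Act} {t1 t2 : Tm Act} : SF M t2 → SF M (Tm.par A t1 t2)
  | conjMisL {t1 t2 y1 : Tm Act} {a : Act} :
      STr M t1 (some a) y1 → (∀ y, ¬ M.Tr t2 (some a) y) →
      (∀ y, ¬ M.Tr (Tm.conj t1 t2) none y) → SF M (Tm.conj t1 t2)
  | conjMisR {t1 t2 y2 : Tm Act} {a : Act} :
      (∀ y, ¬ M.Tr t1 (some a) y) → STr M t2 (some a) y2 →
      (∀ y, ¬ M.Tr (Tm.conj t1 t2) none y) → SF M (Tm.conj t1 t2)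
  | conjDead {t1 t2 z : Tm Act} {α : Option Act} :
      STr M (Tm.conj t1 t2) α z → ¬ M.Fbar (Tm.conj t1 t2) α →
      SF M (Tm.conj t1 t2)

/-- `M` is a stable transition model of `P_CLL`:  `M` coincides with the least
model of the positive TSS `Strip(P_CLL, M)`. -/
def IsStable (M : Model Act) : Prop :=
  (∀ t α t', M.Tr t α t' ↔ STr M t α t') ∧
  (∀ t, M.F t ↔ SF M t) ∧
  (∀ t α, M.Fbar t α ↔ SFbar M t α)

/-- `t` is stable: it has no τ-transition. -/
def Stable (M : Model Act) (t : Tm Act) : Prop := ∀ t', ¬ M.Tr t none t'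

/-- The ready set `I(t)`. -/
def Ready (M : Model Act) (t : Tm Act) : Set (Option Act) :=
  {α | ∃ u, M.Tr t α u}

/-- One τ-step between consistent terms: `t →τ_F s`. -/
def TauF (M : Model Act) (t s : Tm Act) : Prop :=
  M.Tr t none s ∧ ¬ M.F t ∧ ¬ M.F s

/-- `t ⇒ε_F s`: a sequence of τ-transitions all whose terms (endpoints included)
are consistent. -/
def EpsF (M : Model Act) (t s : Tm Act) : Prop :=
  ¬ M.F t ∧ Relation.ReflTransGen (TauF M) t s

/-- `t ⇒ε_F| s`:  `t ⇒ε_F s` with `s` stable. -/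
def EpsFS (M : Model Act) (t s : Tm Act) : Prop :=
  EpsF M t s ∧ Stable M s

/-- `t ⇒α_F s`. -/
def WeakF (M : Model Act) (α : Option Act) (t s : Tm Act) : Prop :=
  ∃ r p, EpsF M t r ∧ M.Tr r α p ∧ EpsF M p s

/-- `t ⇒α_F| s`. -/
def WeakFS (M : Model Act) (α : Option Act) (t s : Tm Act) : Prop :=
  WeakF M α t s ∧ Stable M s

/-- `R` is a stable ready simulation relation. -/
def IsRS (M : Model Act) (R : Tm Act → Tm Act → Prop) : Prop :=
  ∀ t s, R t s →
    (Stable M t ∧ Stable M s) ∧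
    (¬ M.F t → ¬ M.F s) ∧
    (∀ (a : Act) t', WeakFS M (some a) t t' →
      ∃ s', WeakFS M (some a) s s' ∧ R t' s') ∧
    (¬ M.F t → Ready M t = Ready M s)

/-- `t ⊏̃_RS s`. -/
def RSs (M : Model Act) (t s : Tm Act) : Prop :=
  ∃ R, IsRS M R ∧ R t s

/-- `t ⊑_RS s`. -/
def RSle (M : Model Act) (t s : Tm Act) : Prop :=
  ∀ t', EpsFS M t t' → ∃ s', EpsFS M s s' ∧ RSs M t' s'

/-- `t =_RS s`. -/
def RSeq (M : Model Act) (t s : Tm Act) : Prop :=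
  RSle M t s ∧ RSle M s t

/-- The binary operators `□`, `∧` and `∥_A`. -/
def IsStaticOp (Act : Type) (op : Tm Act → Tm Act → Tm Act) : Prop :=
  op = Tm.ec ∨ op = Tm.conj ∨ ∃ A : Set Act, op = Tm.par A

/-- General external choice `□_{i<n} t_i` over a finite sequence of terms. -/
def bigEC : List (Tm Act) → Tm Act
  | [] => Tm.nil
  | t :: ts => ts.foldl Tm.ec t

/-- General disjunction `⋁_{i<n} t_i` over a finite (nonempty) sequence. -/
def bigDisj : List (Tm Act) → Tm Act
  | [] => Tm.nil
  | t :: ts => ts.foldl Tm.disj t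

/-- `□_{i<n} a_i.t_i` for a sequence of prefixed terms given by pairs. -/
def ecPre (l : List (Act × Tm Act)) : Tm Act :=
  bigEC (l.map fun p => Tm.pre (some p.1) p.2)

/-- The sequence of all `a_i.(t_i ∧ s_j)` with `a_i = b_j`. -/
noncomputable def matched (l1 l2 : List (Act × Tm Act)) : List (Act × Tm Act) :=
  ((l1.product l2).filter fun q => decide (q.1.1 = q.2.1)).map
    fun q => (q.1.1, Tm.conj q.1.2 q.2.2)

/-- The right-hand side `((□Ω1)□(□Ω2))□(□Ω3)` of the expansion law. -/
noncomputable def expRHS (A : Set Act) (l1 l2 : List (Act × Tm Act)) : Tm Act :=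
  Tm.ec
    (Tm.ec
      (bigEC ((l1.filter fun p => decide (p.1 ∉ A)).map
        fun p => Tm.pre (some p.1) (Tm.par A p.2 (ecPre l2))))
      (bigEC ((l2.filter fun q => decide (q.1 ∉ A)).map
        fun q => Tm.pre (some q.1) (Tm.par A (ecPre l1) q.2))))
    (bigEC (((l1.product l2).filter fun q => decide (q.1.1 = q.2.1 ∧ q.1.1 ∈ A)).map
      fun q => Tm.pre (some q.1.1) (Tm.par A q.1.2 q.2.2)))

/-- Basic process terms: built from `0` by prefixing, `∨`, `□` and `∥_A`. -/
inductive Basic : Tm Act → Prop where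
  | nil : Basic Tm.nil
  | pre (α : Option Act) {t : Tm Act} : Basic t → Basic (Tm.pre α t)
  | disj {t1 t2 : Tm Act} : Basic t1 → Basic t2 → Basic (Tm.disj t1 t2)
  | ec {t1 t2 : Tm Act} : Basic t1 → Basic t2 → Basic (Tm.ec t1 t2)
  | par (A : Set Act) {t1 t2 : Tm Act} :
      Basic t1 → Basic t2 → Basic (Tm.par A t1 t2)

/-- Derivability `⊢ t ≤ s` in the axiomatic system `AX_CLL`. -/
inductive Deriv : Tm Act → Tm Act → Prop where
  -- inference rules
  | refl (t : Tm Act) : Deriv t t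
  | trans {t u s : Tm Act} : Deriv t u → Deriv u s → Deriv t s
  | pre_mono (α : Option Act) {t s : Tm Act} :
      Deriv t s → Deriv (Tm.pre α t) (Tm.pre α s)
  | ec_mono {t1 s1 t2 s2 : Tm Act} :
      Deriv t1 s1 → Deriv t2 s2 → Deriv (Tm.ec t1 t2) (Tm.ec s1 s2)
  | conj_mono {t1 s1 t2 s2 : Tm Act} :
      Deriv t1 s1 → Deriv t2 s2 → Deriv (Tm.conj t1 t2) (Tm.conj s1 s2)
  | disj_mono {t1 s1 t2 s2 : Tm Act} :
      Deriv t1 s1 → Deriv t2 s2 → Deriv (Tm.disj t1 t2) (Tm.disj s1 s2)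
  | par_mono (A : Set Act) {t1 s1 t2 s2 : Tm Act} :
      Deriv t1 s1 → Deriv t2 s2 → Deriv (Tm.par A t1 t2) (Tm.par A s1 s2)
  -- EC1–EC5
  | ec_comm (x y : Tm Act) : Deriv (Tm.ec x y) (Tm.ec y x)
  | ec_assoc1 (x y z : Tm Act) : Deriv (Tm.ec (Tm.ec x y) z) (Tm.ec x (Tm.ec y z))
  | ec_assoc2 (x y z : Tm Act) : Deriv (Tm.ec x (Tm.ec y z)) (Tm.ec (Tm.ec x y) z)
  | ec_idem1 (x : Tm Act) : Deriv (Tm.ec x x) x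
  | ec_idem2 (x : Tm Act) : Deriv x (Tm.ec x x)
  | ec_nil1 (x : Tm Act) : Deriv (Tm.ec x Tm.nil) x
  | ec_nil2 (x : Tm Act) : Deriv x (Tm.ec x Tm.nil)
  | ec_bot1 (x : Tm Act) : Deriv (Tm.ec x Tm.bot) Tm.bot
  | ec_bot2 (x : Tm Act) : Deriv Tm.bot (Tm.ec x Tm.bot)
  -- DI1–DI5
  | di_comm (x y : Tm Act) : Deriv (Tm.disj x y) (Tm.disj y x)
  | di_assoc1 (x y z : Tm Act) :
      Deriv (Tm.disj x (Tm.disj y z)) (Tm.disj (Tm.disj x y) z)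
  | di_assoc2 (x y z : Tm Act) :
      Deriv (Tm.disj (Tm.disj x y) z) (Tm.disj x (Tm.disj y z))
  | di_idem1 (x : Tm Act) : Deriv (Tm.disj x x) x
  | di_idem2 (x : Tm Act) : Deriv x (Tm.disj x x)
  | di_bot1 (x : Tm Act) : Deriv (Tm.disj x Tm.bot) x
  | di_bot2 (x : Tm Act) : Deriv x (Tm.disj x Tm.bot)
  | di_le (x y : Tm Act) : Deriv x (Tm.disj x y)
  -- CO1–CO4
  | co_comm (x y : Tm Act) : Deriv (Tm.conj x y) (Tm.conj y x)
  | co_assoc1 (x y z : Tm Act) :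
      Deriv (Tm.conj (Tm.conj x y) z) (Tm.conj x (Tm.conj y z))
  | co_assoc2 (x y z : Tm Act) :
      Deriv (Tm.conj x (Tm.conj y z)) (Tm.conj (Tm.conj x y) z)
  | co_idem1 (x : Tm Act) : Deriv (Tm.conj x x) x
  | co_idem2 (x : Tm Act) : Deriv x (Tm.conj x x)
  | co_bot1 (x : Tm Act) : Deriv (Tm.conj x Tm.bot) Tm.bot
  | co_bot2 (x : Tm Act) : Deriv Tm.bot (Tm.conj x Tm.bot)
  -- DS1–DS4
  | ds1 (x y z : Tm Act) :
      Deriv (Tm.ec x (Tm.disj y z)) (Tm.disj (Tm.ec x y) (Tm.ec x z))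
  | ds2 (x y z : Tm Act) :
      Deriv (Tm.conj x (Tm.disj y z)) (Tm.disj (Tm.conj x y) (Tm.conj x z))
  | ds3 (A : Set Act) (x y z : Tm Act) :
      Deriv (Tm.par A x (Tm.disj y z)) (Tm.disj (Tm.par A x y) (Tm.par A x z))
  | ds4 (a : Act) {x y : Tm Act} : Basic x → Basic y →
      Deriv (Tm.pre (some a) (Tm.disj x y))
            (Tm.ec (Tm.pre (some a) x) (Tm.pre (some a) y))
  -- PR1, PR2
  | pr1a (a : Act) : Deriv (Tm.pre (some a) Tm.bot) Tm.bot
  | pr1b (a : Act) : Deriv Tm.bot (Tm.pre (some a) Tm.bot)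
  | pr2a (x : Tm Act) : Deriv (Tm.pre none x) x
  | pr2b (x : Tm Act) : Deriv x (Tm.pre none x)
  -- PA1, PA2
  | pa_comm (A : Set Act) (x y : Tm Act) : Deriv (Tm.par A x y) (Tm.par A y x)
  | pa_bot1 (A : Set Act) (x : Tm Act) : Deriv (Tm.par A x Tm.bot) Tm.bot
  | pa_bot2 (A : Set Act) (x : Tm Act) : Deriv Tm.bot (Tm.par A x Tm.bot)
  -- ECC1–ECC3
  | ecc1a (l1 l2 : List (Act × Tm Act)) :
      ({a | a ∈ l1.map Prod.fst} : Set Act) ≠ {a | a ∈ l2.map Prod.fst} →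
      Deriv (Tm.conj (ecPre l1) (ecPre l2)) Tm.bot
  | ecc1b (l1 l2 : List (Act × Tm Act)) :
      ({a | a ∈ l1.map Prod.fst} : Set Act) ≠ {a | a ∈ l2.map Prod.fst} →
      Deriv Tm.bot (Tm.conj (ecPre l1) (ecPre l2))
  | ecc2 (l : List (Act × Tm Act × Tm Act)) :
      Deriv (ecPre (l.map fun p => (p.1, Tm.conj p.2.1 p.2.2)))
            (Tm.conj (ecPre (l.map fun p => (p.1, p.2.1)))
                     (ecPre (l.map fun p => (p.1, p.2.2))))
  | ecc3 (l : List (Act × Tm Act × Tm Act)) :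
      (l.map Prod.fst).Nodup →
      Deriv (Tm.conj (ecPre (l.map fun p => (p.1, p.2.1)))
                     (ecPre (l.map fun p => (p.1, p.2.2))))
            (ecPre (l.map fun p => (p.1, Tm.conj p.2.1 p.2.2)))
  -- EXP1, EXP2
  | exp1 (A : Set Act) (l1 l2 : List (Act × Tm Act)) :
      (∀ p ∈ l1, Basic p.2) → (∀ q ∈ l2, Basic q.2) →
      Deriv (Tm.par A (ecPre l1) (ecPre l2)) (expRHS A l1 l2)
  | exp2 (A : Set Act) (l1 l2 : List (Act × Tm Act)) :
      (∀ p ∈ l1, Basic p.2) → (∀ q ∈ l2, Basic q.2) →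
      Deriv (expRHS A l1 l2) (Tm.par A (ecPre l1) (ecPre l2))

/-- The set `NF_B` of normal forms different from `⊥`. -/
inductive NFB : Tm Act → Prop where
  | mk (ls : List (List (Act × Tm Act))) :
      ls ≠ [] →
      (∀ l ∈ ls, (l.map Prod.fst).Nodup) →
      (∀ l ∈ ls, ∀ p ∈ l, NFB p.2) →
      NFB (bigDisj (ls.map ecPre))

/-- Normal forms. -/
def NF (t : Tm Act) : Prop := t = Tm.bot ∨ NFB t

end CLL

/-!
Both sides of the expansion law are stable: each is built by `□` and `∥_A` from
prefixed terms, so neither has a τ-transition.  Reading the rules of `P_CLL` off the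
stable model, both have exactly the same transitions, one for every `a_i ∉ A`, every
`b_j ∉ A` and every synchronisation `a_i = b_j ∈ A`.  For stable terms with equal
transitions, `⊑_RS` reduces to the inconsistency clause (RS2).  The left-hand side
is inconsistent whenever the right-hand side is; the converse can only fail through
an inconsistent `t_i` (or `s_j`) whose action is blocked, i.e. lies in `A` without a
partner, and this is what the hypothesis of (2) excludes.
-/

namespace CLL

variable {Act : Type} {M : Model Act}

section Transitions

lemma tr_pre_iff (hM : IsStable M) {α β : Option Act} {t u : Tm Act} :
    M.Tr (Tm.pre α t) β u ↔ β = α ∧ u = t := by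
  rw [hM.1]
  constructor
  · rintro ⟨⟩
    exact ⟨rfl, rfl⟩
  · rintro ⟨rfl, rfl⟩
    exact STr.pre _ _

lemma stable_pre (hM : IsStable M) (a : Act) (t : Tm Act) : Stable M (Tm.pre (some a) t) :=
  fun _ h => nomatch ((tr_pre_iff hM).1 h).1

lemma not_tr_nil (hM : IsStable M) {α : Option Act} {u : Tm Act} : ¬ M.Tr Tm.nil α u := by
  rw [hM.1]
  rintro ⟨⟩

lemma stable_ec (hM : IsStable M) {t1 t2 : Tm Act} (h1 : Stable M t1) (h2 : Stable M t2) :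
    Stable M (Tm.ec t1 t2) := by
  intro u h
  rw [hM.1] at h
  cases h with
  | ecTauL h => exact h1 _ ((hM.1 _ _ _).2 h)
  | ecTauR h => exact h2 _ ((hM.1 _ _ _).2 h)

lemma tr_ec_iff (hM : IsStable M) {t1 t2 : Tm Act} (h1 : Stable M t1) (h2 : Stable M t2)
    {α : Option Act} {u : Tm Act} :
    M.Tr (Tm.ec t1 t2) α u ↔ M.Tr t1 α u ∨ M.Tr t2 α u := by
  constructor
  · intro h
    rw [hM.1] at h
    cases h with
    | ecL h _ => exact Or.inl ((hM.1 _ _ _).2 h)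
    | ecR _ h => exact Or.inr ((hM.1 _ _ _).2 h)
    | ecTauL h => exact (h1 _ ((hM.1 _ _ _).2 h)).elim
    | ecTauR h => exact (h2 _ ((hM.1 _ _ _).2 h)).elim
  · cases α with
    | none => exact fun h => (h.elim (h1 _) (h2 _)).elim
    | some a =>
      rintro (h | h)
      · exact (hM.1 _ _ _).2 (STr.ecL ((hM.1 _ _ _).1 h) h2)
      · exact (hM.1 _ _ _).2 (STr.ecR h1 ((hM.1 _ _ _).1 h))

lemma stable_par (hM : IsStable M) {A : Set Act} {t1 t2 : Tm Act}
    (h1 : Stable M t1) (h2 : Stable M t2) : Stable M (Tm.par A t1 t2) := by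
  intro u h
  rw [hM.1] at h
  cases h with
  | parTauL h => exact h1 _ ((hM.1 _ _ _).2 h)
  | parTauR h => exact h2 _ ((hM.1 _ _ _).2 h)

lemma tr_par_iff (hM : IsStable M) {A : Set Act} {t1 t2 : Tm Act}
    (h1 : Stable M t1) (h2 : Stable M t2) {α : Option Act} {u : Tm Act} :
    M.Tr (Tm.par A t1 t2) α u ↔
      ∃ a, α = some a ∧
        ((a ∉ A ∧ ∃ y, M.Tr t1 (some a) y ∧ u = Tm.par A y t2) ∨
         (a ∉ A ∧ ∃ y, M.Tr t2 (some a) y ∧ u = Tm.par A t1 y) ∨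
         (a ∈ A ∧ ∃ y1 y2, M.Tr t1 (some a) y1 ∧ M.Tr t2 (some a) y2 ∧
            u = Tm.par A y1 y2)) := by
  constructor
  · intro h
    rw [hM.1] at h
    cases h with
    | parTauL h => exact (h1 _ ((hM.1 _ _ _).2 h)).elim
    | parTauR h => exact (h2 _ ((hM.1 _ _ _).2 h)).elim
    | parL h _ ha => exact ⟨_, rfl, Or.inl ⟨ha, _, (hM.1 _ _ _).2 h, rfl⟩⟩
    | parR _ h ha => exact ⟨_, rfl, Or.inr (Or.inl ⟨ha, _, (hM.1 _ _ _).2 h, rfl⟩)⟩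
    | parSync hl hr ha =>
      exact ⟨_, rfl, Or.inr (Or.inr ⟨ha, _, _, (hM.1 _ _ _).2 hl, (hM.1 _ _ _).2 hr, rfl⟩)⟩
  · rintro ⟨a, rfl, ⟨ha, y, hy, rfl⟩ | ⟨ha, y, hy, rfl⟩ | ⟨ha, y1, y2, hy1, hy2, rfl⟩⟩
    · exact (hM.1 _ _ _).2 (STr.parL ((hM.1 _ _ _).1 hy) h2 ha)
    · exact (hM.1 _ _ _).2 (STr.parR h1 ((hM.1 _ _ _).1 hy) ha)
    · exact (hM.1 _ _ _).2 (STr.parSync ((hM.1 _ _ _).1 hy1) ((hM.1 _ _ _).1 hy2) ha)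

end Transitions

section Choice

lemma stable_foldl_ec (hM : IsStable M) {ts : List (Tm Act)} (hts : ∀ s ∈ ts, Stable M s)
    {t : Tm Act} (ht : Stable M t) : Stable M (ts.foldl Tm.ec t) := by
  induction ts generalizing t with
  | nil => exact ht
  | cons s ts ih =>
    exact ih (fun x hx => hts x (List.mem_cons_of_mem _ hx))
      (stable_ec hM ht (hts s List.mem_cons_self))

lemma tr_foldl_ec_iff (hM : IsStable M) {ts : List (Tm Act)} (hts : ∀ s ∈ ts, Stable M s)
    {t : Tm Act} (ht : Stable M t) {α : Option Act} {u : Tm Act} :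
    M.Tr (ts.foldl Tm.ec t) α u ↔ M.Tr t α u ∨ ∃ s ∈ ts, M.Tr s α u := by
  induction ts generalizing t with
  | nil => simp
  | cons s ts ih =>
    have hs : Stable M s := hts s List.mem_cons_self
    rw [List.foldl_cons, ih (fun x hx => hts x (List.mem_cons_of_mem _ hx)) (stable_ec hM ht hs),
      tr_ec_iff hM ht hs, List.exists_mem_cons_iff, or_assoc]

lemma stable_bigEC (hM : IsStable M) {ts : List (Tm Act)} (hts : ∀ s ∈ ts, Stable M s) :
    Stable M (bigEC ts) := by
  cases ts with
  | nil => exact fun _ => not_tr_nil hM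
  | cons t ts =>
    exact stable_foldl_ec hM (fun s hs => hts s (List.mem_cons_of_mem _ hs))
      (hts t List.mem_cons_self)

lemma tr_bigEC_iff (hM : IsStable M) {ts : List (Tm Act)} (hts : ∀ s ∈ ts, Stable M s)
    {α : Option Act} {u : Tm Act} : M.Tr (bigEC ts) α u ↔ ∃ s ∈ ts, M.Tr s α u := by
  cases ts with
  | nil => simpa [bigEC] using not_tr_nil hM
  | cons t ts =>
    rw [List.exists_mem_cons_iff]
    exact tr_foldl_ec_iff hM (fun s hs => hts s (List.mem_cons_of_mem _ hs))
      (hts t List.mem_cons_self)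

variable {β : Type} {l : List β} {f : β → Act} {g : β → Tm Act}

lemma stable_bigEC_map_pre (hM : IsStable M) :
    Stable M (bigEC (l.map fun x => Tm.pre (some (f x)) (g x))) :=
  stable_bigEC hM (by simpa using fun x _ => stable_pre hM (f x) (g x))

lemma tr_bigEC_map_pre_iff (hM : IsStable M) {α : Option Act} {u : Tm Act} :
    M.Tr (bigEC (l.map fun x => Tm.pre (some (f x)) (g x))) α u ↔
      ∃ x ∈ l, α = some (f x) ∧ u = g x := by
  rw [tr_bigEC_iff hM (by simpa using fun x _ => stable_pre hM (f x) (g x))]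
  simp only [List.mem_map, exists_exists_and_eq_and, tr_pre_iff hM]

lemma stable_ecPre (hM : IsStable M) (l : List (Act × Tm Act)) : Stable M (ecPre l) :=
  stable_bigEC_map_pre hM

lemma tr_ecPre_iff (hM : IsStable M) {l : List (Act × Tm Act)} {α : Option Act} {u : Tm Act} :
    M.Tr (ecPre l) α u ↔ ∃ p ∈ l, α = some p.1 ∧ u = p.2 :=
  tr_bigEC_map_pre_iff hM

end Choice

section Inconsistency

lemma not_f_nil (hM : IsStable M) : ¬ M.F (Tm.nil : Tm Act) := by
  rw [hM.2.1]
  rintro ⟨⟩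

lemma f_pre_iff (hM : IsStable M) {α : Option Act} {t : Tm Act} :
    M.F (Tm.pre α t) ↔ M.F t := by
  rw [hM.2.1, hM.2.1]
  constructor
  · rintro ⟨⟩
    assumption
  · exact SF.pre α

lemma f_ec_iff (hM : IsStable M) {t1 t2 : Tm Act} : M.F (Tm.ec t1 t2) ↔ M.F t1 ∨ M.F t2 := by
  rw [hM.2.1, hM.2.1, hM.2.1]
  constructor
  · intro h
    cases h with
    | ecL h => exact Or.inl h
    | ecR h => exact Or.inr h
  · rintro (h | h)
    exacts [SF.ecL h, SF.ecR h]

lemma f_par_iff (hM : IsStable M) {A : Set Act} {t1 t2 : Tm Act} :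
    M.F (Tm.par A t1 t2) ↔ M.F t1 ∨ M.F t2 := by
  rw [hM.2.1, hM.2.1, hM.2.1]
  constructor
  · intro h
    cases h with
    | parL h => exact Or.inl h
    | parR h => exact Or.inr h
  · rintro (h | h)
    exacts [SF.parL h, SF.parR h]

lemma f_foldl_ec_iff (hM : IsStable M) {ts : List (Tm Act)} {t : Tm Act} :
    M.F (ts.foldl Tm.ec t) ↔ M.F t ∨ ∃ s ∈ ts, M.F s := by
  induction ts generalizing t with
  | nil => simp
  | cons s ts ih => rw [List.foldl_cons, ih, f_ec_iff hM, List.exists_mem_cons_iff, or_assoc]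

lemma f_bigEC_iff (hM : IsStable M) {ts : List (Tm Act)} :
    M.F (bigEC ts) ↔ ∃ s ∈ ts, M.F s := by
  cases ts with
  | nil => simpa [bigEC] using not_f_nil hM
  | cons t ts => rw [List.exists_mem_cons_iff]; exact f_foldl_ec_iff hM

lemma f_bigEC_map_pre_iff (hM : IsStable M) {β : Type} {l : List β} {f : β → Act}
    {g : β → Tm Act} :
    M.F (bigEC (l.map fun x => Tm.pre (some (f x)) (g x))) ↔ ∃ x ∈ l, M.F (g x) := by
  simp only [f_bigEC_iff hM, List.mem_map, exists_exists_and_eq_and, f_pre_iff hM]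

lemma f_ecPre_iff (hM : IsStable M) {l : List (Act × Tm Act)} :
    M.F (ecPre l) ↔ ∃ p ∈ l, M.F p.2 :=
  f_bigEC_map_pre_iff hM

end Inconsistency

section Expansion

variable (A : Set Act) (l1 l2 : List (Act × Tm Act))

def ExpansionStep (α : Option Act) (u : Tm Act) : Prop :=
  (∃ p ∈ l1, p.1 ∉ A ∧ α = some p.1 ∧ u = Tm.par A p.2 (ecPre l2)) ∨
  (∃ q ∈ l2, q.1 ∉ A ∧ α = some q.1 ∧ u = Tm.par A (ecPre l1) q.2) ∨
  (∃ p ∈ l1, ∃ q ∈ l2, p.1 = q.1 ∧ p.1 ∈ A ∧ α = some p.1 ∧ u = Tm.par A p.2 q.2)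

lemma stable_par_ecPre (hM : IsStable M) : Stable M (Tm.par A (ecPre l1) (ecPre l2)) :=
  stable_par hM (stable_ecPre hM l1) (stable_ecPre hM l2)

lemma stable_expRHS (hM : IsStable M) : Stable M (expRHS A l1 l2) :=
  stable_ec hM (stable_ec hM (stable_bigEC_map_pre hM) (stable_bigEC_map_pre hM))
    (stable_bigEC_map_pre hM)

variable {A l1 l2}

lemma tr_par_ecPre_iff (hM : IsStable M) {α : Option Act} {u : Tm Act} :
    M.Tr (Tm.par A (ecPre l1) (ecPre l2)) α u ↔ ExpansionStep A l1 l2 α u := by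
  rw [tr_par_iff hM (stable_ecPre hM l1) (stable_ecPre hM l2)]
  simp only [tr_ecPre_iff hM, ExpansionStep, Option.some.injEq]
  constructor
  · rintro ⟨a, rfl, ⟨ha, _, ⟨p, hp, rfl, rfl⟩, rfl⟩ | ⟨ha, _, ⟨q, hq, rfl, rfl⟩, rfl⟩ |
      ⟨ha, _, _, ⟨p, hp, rfl, rfl⟩, ⟨q, hq, hpq, rfl⟩, rfl⟩⟩
    exacts [Or.inl ⟨p, hp, ha, rfl, rfl⟩, Or.inr (Or.inl ⟨q, hq, ha, rfl, rfl⟩),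
      Or.inr (Or.inr ⟨p, hp, q, hq, hpq, ha, rfl, rfl⟩)]
  · rintro (⟨p, hp, ha, rfl, rfl⟩ | ⟨q, hq, ha, rfl, rfl⟩ | ⟨p, hp, q, hq, hpq, ha, rfl, rfl⟩)
    exacts [⟨_, rfl, Or.inl ⟨ha, _, ⟨p, hp, rfl, rfl⟩, rfl⟩⟩,
      ⟨_, rfl, Or.inr (Or.inl ⟨ha, _, ⟨q, hq, rfl, rfl⟩, rfl⟩)⟩,
      ⟨_, rfl, Or.inr (Or.inr ⟨ha, _, _, ⟨p, hp, rfl, rfl⟩, ⟨q, hq, hpq, rfl⟩, rfl⟩)⟩]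

lemma tr_expRHS_iff (hM : IsStable M) {α : Option Act} {u : Tm Act} :
    M.Tr (expRHS A l1 l2) α u ↔ ExpansionStep A l1 l2 α u := by
  rw [expRHS, tr_ec_iff hM (stable_ec hM (stable_bigEC_map_pre hM) (stable_bigEC_map_pre hM))
    (stable_bigEC_map_pre hM), tr_ec_iff hM (stable_bigEC_map_pre hM) (stable_bigEC_map_pre hM),
    tr_bigEC_map_pre_iff hM, tr_bigEC_map_pre_iff hM, tr_bigEC_map_pre_iff hM]
  simp only [ExpansionStep, List.mem_filter, List.pair_mem_product, decide_eq_true_eq,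
    Prod.exists, and_assoc, or_assoc, exists_and_left]

lemma f_par_ecPre_iff (hM : IsStable M) :
    M.F (Tm.par A (ecPre l1) (ecPre l2)) ↔ (∃ p ∈ l1, M.F p.2) ∨ ∃ q ∈ l2, M.F q.2 := by
  rw [f_par_iff hM, f_ecPre_iff hM, f_ecPre_iff hM]

lemma f_expRHS_iff (hM : IsStable M) :
    M.F (expRHS A l1 l2) ↔
      (∃ p ∈ l1, p.1 ∉ A ∧ (M.F p.2 ∨ M.F (ecPre l2))) ∨
      (∃ q ∈ l2, q.1 ∉ A ∧ (M.F (ecPre l1) ∨ M.F q.2)) ∨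
      (∃ p ∈ l1, ∃ q ∈ l2, p.1 = q.1 ∧ p.1 ∈ A ∧ (M.F p.2 ∨ M.F q.2)) := by
  rw [expRHS, f_ec_iff hM, f_ec_iff hM, f_bigEC_map_pre_iff hM, f_bigEC_map_pre_iff hM,
    f_bigEC_map_pre_iff hM]
  simp only [f_par_iff hM, List.mem_filter, List.pair_mem_product, decide_eq_true_eq,
    Prod.exists, and_assoc, or_assoc, exists_and_left]

lemma f_par_ecPre_of_f_expRHS (hM : IsStable M) (h : M.F (expRHS A l1 l2)) :
    M.F (Tm.par A (ecPre l1) (ecPre l2)) := by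
  rw [f_expRHS_iff hM] at h
  rw [f_par_iff hM]
  rcases h with ⟨p, hp, -, hF | hF⟩ | ⟨q, hq, -, hF | hF⟩ | ⟨p, hp, q, hq, -, -, hF | hF⟩
  · exact Or.inl ((f_ecPre_iff hM).2 ⟨p, hp, hF⟩)
  · exact Or.inr hF
  · exact Or.inl hF
  · exact Or.inr ((f_ecPre_iff hM).2 ⟨q, hq, hF⟩)
  · exact Or.inl ((f_ecPre_iff hM).2 ⟨p, hp, hF⟩)
  · exact Or.inr ((f_ecPre_iff hM).2 ⟨q, hq, hF⟩)

lemma f_expRHS_of_f_par_ecPre (hM : IsStable M)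
    (h1 : ∀ p ∈ l1, p.1 ∈ A → (∀ q ∈ l2, p.1 ≠ q.1) → ¬ M.F p.2)
    (h2 : ∀ q ∈ l2, q.1 ∈ A → (∀ p ∈ l1, q.1 ≠ p.1) → ¬ M.F q.2)
    (h : M.F (Tm.par A (ecPre l1) (ecPre l2))) : M.F (expRHS A l1 l2) := by
  rw [f_expRHS_iff hM]
  rcases (f_par_ecPre_iff hM).1 h with ⟨p, hp, hF⟩ | ⟨q, hq, hF⟩
  · by_cases hpA : p.1 ∈ A
    · obtain ⟨q, hq, hpq⟩ : ∃ q ∈ l2, p.1 = q.1 := by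
        by_contra! hblocked
        exact h1 p hp hpA hblocked hF
      exact Or.inr (Or.inr ⟨p, hp, q, hq, hpq, hpA, Or.inl hF⟩)
    · exact Or.inl ⟨p, hp, hpA, Or.inl hF⟩
  · by_cases hqA : q.1 ∈ A
    · obtain ⟨p, hp, hqp⟩ : ∃ p ∈ l1, q.1 = p.1 := by
        by_contra! hblocked
        exact h2 q hq hqA hblocked hF
      exact Or.inr (Or.inr ⟨p, hp, q, hq, hqp.symm, hqp ▸ hqA, Or.inr hF⟩)
    · exact Or.inr (Or.inl ⟨q, hq, hqA, Or.inr hF⟩)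

end Expansion

section ReadySimulation

lemma eq_of_reflTransGen_tauF {t t' : Tm Act} (ht : Stable M t)
    (h : Relation.ReflTransGen (TauF M) t t') : t' = t := by
  rcases h.cases_head with h' | ⟨c, hc, -⟩
  · exact h'.symm
  · exact (ht c hc.1).elim

lemma weakFS_of_tr_iff {t s w : Tm Act} {α : Option Act} (ht : Stable M t)
    (htr : ∀ α u, M.Tr t α u ↔ M.Tr s α u) (hF : ¬ M.F t → ¬ M.F s) (h : WeakFS M α t w) :
    WeakFS M α s w := by
  obtain ⟨⟨r, p, ⟨htF, hr⟩, hrp, hpw⟩, hw⟩ := h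
  rw [eq_of_reflTransGen_tauF ht hr] at hrp
  exact ⟨⟨s, p, ⟨hF htF, .refl⟩, (htr α p).1 hrp, hpw⟩, hw⟩

lemma rss_of_tr_iff {t s : Tm Act} (ht : Stable M t) (hs : Stable M s)
    (htr : ∀ α u, M.Tr t α u ↔ M.Tr s α u) (hF : ¬ M.F t → ¬ M.F s) : RSs M t s := by
  refine ⟨fun u v => (u = t ∧ v = s) ∨ (Stable M u ∧ u = v), ?_, Or.inl ⟨rfl, rfl⟩⟩
  rintro u v (⟨rfl, rfl⟩ | ⟨hu, rfl⟩)
  · refine ⟨⟨ht, hs⟩, hF, fun a w hw => ?_, fun _ => Set.ext fun α => exists_congr (htr α)⟩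
    exact ⟨w, weakFS_of_tr_iff ht htr hF hw, Or.inr ⟨hw.2, rfl⟩⟩
  · exact ⟨⟨hu, hu⟩, id, fun a w hw => ⟨w, hw, Or.inr ⟨hw.2, rfl⟩⟩, fun _ => rfl⟩

lemma rsle_of_tr_iff {t s : Tm Act} (ht : Stable M t) (hs : Stable M s)
    (htr : ∀ α u, M.Tr t α u ↔ M.Tr s α u) (hF : ¬ M.F t → ¬ M.F s) : RSle M t s := by
  rintro t' ⟨⟨htF, htt'⟩, -⟩
  rw [eq_of_reflTransGen_tauF ht htt']
  exact ⟨s, ⟨⟨hF htF, .refl⟩, hs⟩, rss_of_tr_iff ht hs htr hF⟩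

end ReadySimulation

end CLL

/-- expansion law for the parallel composition of general
external choices of prefixed terms. -/
theorem stmt16 (Act : Type) (M : CLL.Model Act) (hM : CLL.IsStable M)
    (A : Set Act) (l1 l2 : List (Act × CLL.Tm Act)) :
    CLL.RSle M (CLL.Tm.par A (CLL.ecPre l1) (CLL.ecPre l2))
      (CLL.expRHS A l1 l2) ∧
    ((∀ p ∈ l1, p.1 ∈ A → (∀ q ∈ l2, p.1 ≠ q.1) → ¬ M.F p.2) →
     (∀ q ∈ l2, q.1 ∈ A → (∀ p ∈ l1, q.1 ≠ p.1) → ¬ M.F q.2) →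
     CLL.RSle M (CLL.expRHS A l1 l2)
       (CLL.Tm.par A (CLL.ecPre l1) (CLL.ecPre l2))) := by
  have hL := CLL.stable_par_ecPre A l1 l2 hM
  have hR := CLL.stable_expRHS A l1 l2 hM
  have htr : ∀ α u, M.Tr (CLL.Tm.par A (CLL.ecPre l1) (CLL.ecPre l2)) α u ↔
      M.Tr (CLL.expRHS A l1 l2) α u :=
    fun _ _ => (CLL.tr_par_ecPre_iff hM).trans (CLL.tr_expRHS_iff hM).symm
  exact ⟨CLL.rsle_of_tr_iff hL hR htr (mt (CLL.f_par_ecPre_of_f_expRHS hM)),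
    fun h1 h2 => CLL.rsle_of_tr_iff hR hL (fun α u => (htr α u).symm)
      (mt (CLL.f_expRHS_of_f_par_ecPre hM h1 h2))⟩
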